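/- arXiv:2508.05309 — 2 statements merged into one kernel-verified Lean document; each statement's English description precedes it below -/
import Mathlib

section
/- Sum capacity of the pinching-antenna multiple access channel (Theorem 1): Assume for every user k that G_k := sup_{v̄ ∈ V} |γ(v̄; w_k)|² is attained and G_k > 0. Then the supremum of the average sum rate R̄(v,p) over all feasible transmission strategies (v,p) equals log₂(1 + P·(Σ_{k=1}^K G_k)/(N σ²)). -/
open MeasureTheory

noncomputable section

/-- Euclidean distance between two points of ℝ³ (represented as `ℝ × ℝ × ℝ`). -/
def dist3 (a b : ℝ × ℝ × ℝ) : ℝ :=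
  Real.sqrt ((a.1 - b.1) ^ 2 + (a.2.1 - b.2.1) ^ 2 + (a.2.2 - b.2.2) ^ 2)

/-- Feasible set of antenna x-coordinates: `0 ≤ v 0`, successive gaps at least `Δ`,
and `v (N-1) ≤ Lmax`. -/
def Vfeas (N : ℕ) (Δ Lmax : ℝ) : Set (Fin N → ℝ) :=
  {v | (∀ i : Fin N, (i : ℕ) = 0 → 0 ≤ v i) ∧
       (∀ i j : Fin N, (j : ℕ) = (i : ℕ) + 1 → Δ ≤ v j - v i) ∧
       (∀ i : Fin N, (i : ℕ) = N - 1 → v i ≤ Lmax)}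

/-- Effective channel coefficient `γ(v̄; w)` of the pinching-antenna system, with
`η = λ²/(16π²)`, antenna `n` at `(v n, 0, d)` and feed point at `(-Dx/2, 0, d)`. -/
def gamma (N : ℕ) (lam lamg d Dx : ℝ) (v : Fin N → ℝ) (w : ℝ × ℝ × ℝ) : ℂ :=
  ∑ n : Fin N,
    Complex.exp (-(Complex.I) * ((2 * Real.pi / lamg * dist3 (v n, 0, d) (-Dx / 2, 0, d) : ℝ) : ℂ)) *
      (((Real.sqrt (lam ^ 2 / (16 * Real.pi ^ 2)) : ℝ) : ℂ) *
        Complex.exp (-(Complex.I) * ((2 * Real.pi / lam * dist3 (v n, 0, d) w : ℝ) : ℂ)) /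
        ((dist3 (v n, 0, d) w : ℝ) : ℂ))

/-- Channel power gain `|γ(v̄; w)|²`. -/
def gain (N : ℕ) (lam lamg d Dx : ℝ) (v : Fin N → ℝ) (w : ℝ × ℝ × ℝ) : ℝ :=
  ‖gamma N lam lamg d Dx v w‖ ^ 2

/-- A feasible transmission strategy: measurable antenna trajectory taking values in the
feasible set, measurable nonnegative powers with per-user average power budget `P`. -/
def Feasible (N K : ℕ) (Δ Lmax T P : ℝ)
    (v : ℝ → Fin N → ℝ) (p : ℝ → Fin K → ℝ) : Prop :=
  Measurable v ∧ Measurable p ∧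
  (∀ t ∈ Set.Ioc (0 : ℝ) T, v t ∈ Vfeas N Δ Lmax) ∧
  (∀ t ∈ Set.Ioc (0 : ℝ) T, ∀ k, 0 ≤ p t k) ∧
  (∀ k, ∫⁻ t in Set.Ioc (0 : ℝ) T, ENNReal.ofReal (p t k) ≤ ENNReal.ofReal (T * P))

/-- Average sum rate of a transmission strategy over the period `(0, T]`. -/
def avgRate (N K : ℕ) (lam lamg d Dx σ2 T : ℝ) (w : Fin K → ℝ × ℝ × ℝ)
    (v : ℝ → Fin N → ℝ) (p : ℝ → Fin K → ℝ) : ℝ :=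
  (1 / T) * ∫ t in Set.Ioc (0 : ℝ) T,
    Real.logb 2 (1 + (∑ k, p t k * gain N lam lamg d Dx (v t) (w k)) / (N * σ2))

end

/-!
Write `X t = ∑ k, p t k * |γ(v t; w k)|²` for the received power, so that the rate at time `t` is
`log₂ (1 + X t / (N σ²))`. Since `|γ(v t; w k)|² ≤ G k` and each user spends at most `T P`, the
time average of `X` is at most `P ∑ G`, and Jensen's inequality for the concave `log (1 + ·)`
(integrate its tangent line) bounds the average rate by `log₂ (1 + P ∑ G / (N σ²))`.
The bound is attained by time sharing: for a fraction `G k / ∑ G` of the period only user `k`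
transmits, with power `P ∑ G / G k` and the antennas at a placement maximising its gain. Then
`X` is constantly `P ∑ G` and every power budget is met with equality.
-/

open Set

lemma Real.log_le_log_add_sub_div {c x : ℝ} (hc : -1 < c) (hx : -1 < x) :
    Real.log (1 + x) ≤ Real.log (1 + c) + (x - c) / (1 + c) := by
  have h := Real.log_le_sub_one_of_pos (x := (1 + x) / (1 + c)) (by apply div_pos <;> linarith)
  rw [Real.log_div (by linarith) (by linarith)] at h
  have hc' : 1 + c ≠ 0 := by linarith
  have : (1 + x) / (1 + c) - 1 = (x - c) / (1 + c) := by field_simp; ring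
  linarith

theorem setIntegral_log_one_add_le {α : Type*} [MeasurableSpace α] {μ : Measure α} {s : Set α}
    (hs : MeasurableSet s) (hμs : μ s ≠ ⊤) {f : α → ℝ} (hf : IntegrableOn f s μ)
    (hf0 : ∀ t ∈ s, 0 ≤ f t) {c : ℝ} (hc : 0 ≤ c) (hfc : ∫ t in s, f t ∂μ ≤ μ.real s * c) :
    ∫ t in s, Real.log (1 + f t) ∂μ ≤ μ.real s * Real.log (1 + c) := by
  have hconst : ∀ a : ℝ, IntegrableOn (fun _ => a) s μ := fun a => integrableOn_const hμs
  have hlog : IntegrableOn (fun t => Real.log (1 + f t)) s μ := by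
    refine hf.mono' (Real.measurable_log.comp_aemeasurable
      (aemeasurable_const.add hf.aemeasurable)).aestronglyMeasurable ?_
    filter_upwards [ae_restrict_mem hs] with t ht
    have hft := hf0 t ht
    rw [Real.norm_eq_abs, abs_of_nonneg (Real.log_nonneg (by linarith))]
    linarith [Real.log_le_sub_one_of_pos (x := 1 + f t) (by linarith)]
  have hdev : IntegrableOn (fun t => (f t - c) / (1 + c)) s μ :=
    (hf.sub (hconst c)).div_const _
  calc ∫ t in s, Real.log (1 + f t) ∂μ
      ≤ ∫ t in s, (Real.log (1 + c) + (f t - c) / (1 + c)) ∂μ :=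
        setIntegral_mono_on hlog ((hconst _).add hdev) hs fun t ht =>
          Real.log_le_log_add_sub_div (by linarith) (by linarith [hf0 t ht])
    _ = μ.real s * Real.log (1 + c) + (∫ t in s, f t ∂μ - μ.real s * c) / (1 + c) := by
        rw [integral_add (hconst _) hdev, integral_div, integral_sub hf (hconst c),
          setIntegral_const, setIntegral_const, smul_eq_mul, smul_eq_mul]
    _ ≤ μ.real s * Real.log (1 + c) := by
        have : (∫ t in s, f t ∂μ - μ.real s * c) / (1 + c) ≤ 0 :=
          div_nonpos_of_nonpos_of_nonneg (by linarith) (by linarith)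
        linarith

lemma Fin.partialSum_last {M : Type*} [AddCommMonoid M] {n : ℕ} (f : Fin n → M) :
    Fin.partialSum f (Fin.last n) = ∑ i, f i := by
  rw [Fin.partialSum, Fin.val_last, List.take_of_length_le (by simp), List.sum_ofFn]

lemma Fin.monotone_partialSum {M : Type*} [AddMonoid M] [Preorder M] [AddLeftMono M] {n : ℕ}
    {f : Fin n → M} (hf : 0 ≤ f) : Monotone (Fin.partialSum f) :=
  Fin.monotone_iff_le_succ.2 fun i => by
    rw [Fin.partialSum_succ]
    exact le_add_of_nonneg_right (hf i)

lemma exists_breakpoints {K : ℕ} {a : Fin K → ℝ} (ha : 0 ≤ a) :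
    ∃ c : Fin (K + 1) → ℝ, Monotone c ∧ c 0 = 0 ∧ c (Fin.last K) = ∑ k, a k ∧
      ∀ k, c k.succ - c k.castSucc = a k :=
  ⟨Fin.partialSum a, Fin.monotone_partialSum ha, Fin.partialSum_zero a, Fin.partialSum_last a,
    fun k => by rw [Fin.partialSum_succ, add_sub_cancel_left]⟩

section TimeSharing

variable {K : ℕ} {c : Fin (K + 1) → ℝ} {t : ℝ}

def timeSlot (c : Fin (K + 1) → ℝ) (k : Fin K) : Set ℝ :=
  Ioc (c k.castSucc) (c k.succ)

lemma measurableSet_timeSlot (c : Fin (K + 1) → ℝ) (k : Fin K) : MeasurableSet (timeSlot c k) :=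
  measurableSet_Ioc

lemma exists_mem_timeSlot (ht : t ∈ Ioc (c 0) (c (Fin.last K))) : ∃ k, t ∈ timeSlot c k := by
  induction K with
  | zero => exact absurd ht (by simp)
  | succ K ih =>
    by_cases hle : t ≤ c (Fin.last K).castSucc
    · obtain ⟨k, hk⟩ := ih (c := c ∘ Fin.castSucc) ⟨ht.1, hle⟩
      exact ⟨k.castSucc, by rwa [timeSlot, Fin.succ_castSucc]⟩
    · exact ⟨Fin.last K, lt_of_not_ge hle, by simpa [Fin.succ_last] using ht.2⟩

lemma Monotone.timeSlot_subset (hc : Monotone c) (k : Fin K) :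
    timeSlot c k ⊆ Ioc (c 0) (c (Fin.last K)) :=
  Ioc_subset_Ioc (hc (Fin.zero_le _)) (hc (Fin.le_last _))

lemma Monotone.notMem_timeSlot (hc : Monotone c) {j k : Fin K} (hk : t ∈ timeSlot c k)
    (hjk : j ≠ k) : t ∉ timeSlot c j := by
  intro hj
  rcases hjk.lt_or_gt with hlt | hlt
  · exact (hj.2.trans (hc (Fin.succ_le_castSucc_iff.2 hlt))).not_gt hk.1
  · exact (hk.2.trans (hc (Fin.succ_le_castSucc_iff.2 hlt))).not_gt hj.1

noncomputable def timeShared {β : Type*} [AddCommMonoid β] (c : Fin (K + 1) → ℝ)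
    (f : Fin K → β) (t : ℝ) : β :=
  ∑ k, (timeSlot c k).indicator (fun _ => f k) t

lemma Monotone.timeShared_of_mem {β : Type*} [AddCommMonoid β] (hc : Monotone c) {k : Fin K}
    (hk : t ∈ timeSlot c k) (f : Fin K → β) : timeShared c f t = f k :=
  (Finset.sum_eq_single k (fun _ _ hjk => indicator_of_notMem (hc.notMem_timeSlot hk hjk) _)
    (by simp)).trans (indicator_of_mem hk _)

lemma measurable_timeShared {β : Type*} [AddCommMonoid β] [MeasurableSpace β] [MeasurableAdd₂ β]
    (c : Fin (K + 1) → ℝ) (f : Fin K → β) : Measurable (timeShared c f) :=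
  Finset.measurable_fun_sum _ fun _ _ => measurable_const.indicator (measurableSet_timeSlot c _)

end TimeSharing

lemma measurable_gain (N : ℕ) (lam lamg d Dx : ℝ) (w : ℝ × ℝ × ℝ) :
    Measurable fun v : Fin N → ℝ => gain N lam lamg d Dx v w := by
  unfold gain gamma dist3
  fun_prop

noncomputable def receivedPower (N K : ℕ) (lam lamg d Dx : ℝ) (w : Fin K → ℝ × ℝ × ℝ)
    (v : ℝ → Fin N → ℝ) (p : ℝ → Fin K → ℝ) (t : ℝ) : ℝ :=
  ∑ k, p t k * gain N lam lamg d Dx (v t) (w k)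

namespace Feasible

variable {N K : ℕ} {lam lamg d Dx Δ Lmax T P : ℝ} {w : Fin K → ℝ × ℝ × ℝ}
  {v : ℝ → Fin N → ℝ} {p : ℝ → Fin K → ℝ} {G : Fin K → ℝ}

lemma power_nonneg_ae (h : Feasible N K Δ Lmax T P v p) (k : Fin K) :
    0 ≤ᵐ[volume.restrict (Ioc 0 T)] fun t => p t k := by
  filter_upwards [ae_restrict_mem measurableSet_Ioc] with t ht using h.2.2.2.1 t ht k

lemma integrableOn_power (h : Feasible N K Δ Lmax T P v p) (k : Fin K) :
    IntegrableOn (fun t => p t k) (Ioc 0 T) :=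
  ⟨((measurable_pi_apply k).comp h.2.1).aestronglyMeasurable,
    (hasFiniteIntegral_iff_ofReal (h.power_nonneg_ae k)).2
      ((h.2.2.2.2 k).trans_lt ENNReal.ofReal_lt_top)⟩

lemma setIntegral_power_le (h : Feasible N K Δ Lmax T P v p) (hTP : 0 ≤ T * P) (k : Fin K) :
    ∫ t in Ioc 0 T, p t k ≤ T * P := by
  rw [← ENNReal.ofReal_le_ofReal_iff hTP,
    ofReal_integral_eq_lintegral_ofReal (h.integrableOn_power k) (h.power_nonneg_ae k)]
  exact h.2.2.2.2 k

lemma receivedPower_nonneg (h : Feasible N K Δ Lmax T P v p) {t : ℝ} (ht : t ∈ Ioc 0 T) :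
    0 ≤ receivedPower N K lam lamg d Dx w v p t :=
  Finset.sum_nonneg fun k _ => mul_nonneg (h.2.2.2.1 t ht k) (sq_nonneg _)

lemma receivedPower_le (h : Feasible N K Δ Lmax T P v p)
    (hG : ∀ k, ∀ vb ∈ Vfeas N Δ Lmax, gain N lam lamg d Dx vb (w k) ≤ G k)
    {t : ℝ} (ht : t ∈ Ioc 0 T) :
    receivedPower N K lam lamg d Dx w v p t ≤ ∑ k, p t k * G k :=
  Finset.sum_le_sum fun k _ =>
    mul_le_mul_of_nonneg_left (hG k (v t) (h.2.2.1 t ht)) (h.2.2.2.1 t ht k)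

lemma integrableOn_receivedPower (h : Feasible N K Δ Lmax T P v p)
    (hG : ∀ k, ∀ vb ∈ Vfeas N Δ Lmax, gain N lam lamg d Dx vb (w k) ≤ G k) :
    IntegrableOn (receivedPower N K lam lamg d Dx w v p) (Ioc 0 T) := by
  have hmeas : Measurable (receivedPower N K lam lamg d Dx w v p) :=
    Finset.measurable_sum _ fun k _ =>
      ((measurable_pi_apply k).comp h.2.1).mul ((measurable_gain _ _ _ _ _ _).comp h.1)
  refine (integrable_finsetSum Finset.univ fun k _ =>
    (h.integrableOn_power k).mul_const (G k)).mono' hmeas.aestronglyMeasurable ?_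
  filter_upwards [ae_restrict_mem measurableSet_Ioc] with t ht
  rw [Real.norm_eq_abs, abs_of_nonneg (h.receivedPower_nonneg ht)]
  exact h.receivedPower_le hG ht

lemma setIntegral_receivedPower_le (h : Feasible N K Δ Lmax T P v p)
    (hG : ∀ k, ∀ vb ∈ Vfeas N Δ Lmax, gain N lam lamg d Dx vb (w k) ≤ G k)
    (hG0 : ∀ k, 0 ≤ G k) (hTP : 0 ≤ T * P) :
    ∫ t in Ioc 0 T, receivedPower N K lam lamg d Dx w v p t ≤ T * P * ∑ k, G k := by
  have hpG : ∀ k ∈ Finset.univ, IntegrableOn (fun t => p t k * G k) (Ioc 0 T) :=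
    fun k _ => (h.integrableOn_power k).mul_const (G k)
  calc ∫ t in Ioc 0 T, receivedPower N K lam lamg d Dx w v p t
      ≤ ∫ t in Ioc 0 T, ∑ k, p t k * G k :=
        setIntegral_mono_on (h.integrableOn_receivedPower hG)
          (integrable_finsetSum Finset.univ hpG) measurableSet_Ioc fun t ht =>
            h.receivedPower_le hG ht
    _ = ∑ k, (∫ t in Ioc 0 T, p t k) * G k := by
        rw [integral_finsetSum Finset.univ hpG]
        simp only [integral_mul_const]
    _ ≤ ∑ k, T * P * G k :=
        Finset.sum_le_sum fun k _ =>
          mul_le_mul_of_nonneg_right (h.setIntegral_power_le hTP k) (hG0 k)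
    _ = T * P * ∑ k, G k := (Finset.mul_sum _ _ _).symm

lemma avgRate_le (h : Feasible N K Δ Lmax T P v p)
    (hG : ∀ k, ∀ vb ∈ Vfeas N Δ Lmax, gain N lam lamg d Dx vb (w k) ≤ G k)
    (hG0 : ∀ k, 0 ≤ G k) (hT : 0 < T) (hP : 0 ≤ P) {σ2 : ℝ} (hσ : 0 ≤ σ2) :
    avgRate N K lam lamg d Dx σ2 T w v p ≤ Real.logb 2 (1 + P * (∑ k, G k) / (N * σ2)) := by
  have hNσ : 0 ≤ (N : ℝ) * σ2 := by positivity
  have hS : 0 ≤ ∑ k, G k := Finset.sum_nonneg fun k _ => hG0 k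
  have hjensen := setIntegral_log_one_add_le measurableSet_Ioc measure_Ioc_lt_top.ne
    ((h.integrableOn_receivedPower hG).div_const ((N : ℝ) * σ2))
    (fun t ht => div_nonneg (h.receivedPower_nonneg ht) hNσ)
    (c := P * (∑ k, G k) / (N * σ2)) (by positivity)
    (by
      rw [integral_div, Real.volume_real_Ioc_of_le hT.le, sub_zero, ← mul_div_assoc, ← mul_assoc]
      exact div_le_div_of_nonneg_right (h.setIntegral_receivedPower_le hG hG0 (by positivity)) hNσ)
  rw [Real.volume_real_Ioc_of_le hT.le, sub_zero] at hjensen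
  change 1 / T * ∫ t in Ioc 0 T,
      Real.log (1 + receivedPower N K lam lamg d Dx w v p t / (N * σ2)) / Real.log 2 ≤ _
  rw [integral_div, Real.logb]
  calc 1 / T * ((∫ t in Ioc 0 T,
          Real.log (1 + receivedPower N K lam lamg d Dx w v p t / (N * σ2))) / Real.log 2)
      ≤ 1 / T * (T * Real.log (1 + P * (∑ k, G k) / (N * σ2)) / Real.log 2) := by gcongr
    _ = _ := by field_simp

end Feasible

section Achievability

variable {N K : ℕ} {lam lamg d Dx Δ Lmax T P : ℝ} {w : Fin K → ℝ × ℝ × ℝ}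
  {c : Fin (K + 1) → ℝ} {vstar : Fin K → Fin N → ℝ} {q : Fin K → ℝ}

noncomputable def timeSharedPower (c : Fin (K + 1) → ℝ) (q : Fin K → ℝ) (t : ℝ) (k : Fin K) :
    ℝ :=
  (timeSlot c k).indicator (fun _ => q k) t

lemma lintegral_timeSharedPower (hc : Monotone c) (hc0 : c 0 = 0) (hcT : c (Fin.last K) = T)
    (hq : 0 ≤ q) (k : Fin K) :
    ∫⁻ t in Ioc 0 T, ENNReal.ofReal (timeSharedPower c q t k)
      = ENNReal.ofReal (q k * (c k.succ - c k.castSucc)) := by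
  have hslot : timeSlot c k ⊆ Ioc 0 T := hc0 ▸ hcT ▸ hc.timeSlot_subset k
  have hpow : (fun t => ENNReal.ofReal (timeSharedPower c q t k))
      = (timeSlot c k).indicator fun _ => ENNReal.ofReal (q k) :=
    (indicator_comp_of_zero ENNReal.ofReal_zero).symm
  rw [hpow, lintegral_indicator_const (measurableSet_timeSlot c k),
    Measure.restrict_apply (measurableSet_timeSlot c k), inter_eq_left.2 hslot, timeSlot,
    Real.volume_Ioc, ← ENNReal.ofReal_mul (hq k)]

lemma feasible_timeShared (hc : Monotone c) (hc0 : c 0 = 0) (hcT : c (Fin.last K) = T)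
    (hv : ∀ k, vstar k ∈ Vfeas N Δ Lmax) (hq : 0 ≤ q)
    (hqT : ∀ k, q k * (c k.succ - c k.castSucc) ≤ T * P) :
    Feasible N K Δ Lmax T P (timeShared c vstar) (timeSharedPower c q) := by
  refine ⟨measurable_timeShared c vstar,
    measurable_pi_lambda _ fun k => measurable_const.indicator (measurableSet_timeSlot c k),
    fun t ht => ?_, fun t _ k => indicator_nonneg (fun _ _ => hq k) t, fun k => ?_⟩
  · obtain ⟨k, hk⟩ := exists_mem_timeSlot (c := c) (by rwa [hc0, hcT])
    rw [hc.timeShared_of_mem hk]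
    exact hv k
  · rw [lintegral_timeSharedPower hc hc0 hcT hq]
    exact ENNReal.ofReal_le_ofReal (hqT k)

lemma Monotone.receivedPower_timeShared (hc : Monotone c) {t : ℝ} {k : Fin K}
    (hk : t ∈ timeSlot c k) :
    receivedPower N K lam lamg d Dx w (timeShared c vstar) (timeSharedPower c q) t
      = q k * gain N lam lamg d Dx (vstar k) (w k) := by
  rw [receivedPower, hc.timeShared_of_mem hk]
  exact (Finset.sum_congr rfl fun j _ => (indicator_mul_left _ _ fun _ => _).symm).trans
    (hc.timeShared_of_mem hk fun j => q j * gain N lam lamg d Dx (vstar k) (w j))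

theorem exists_feasible_avgRate_eq (hK : 1 ≤ K) (hT : 0 < T) (hP : 0 ≤ P) {G : Fin K → ℝ}
    (hGatt : ∀ k, IsGreatest
      ((fun vb => gain N lam lamg d Dx vb (w k)) '' Vfeas N Δ Lmax) (G k))
    (hGpos : ∀ k, 0 < G k) (σ2 : ℝ) :
    ∃ v p, Feasible N K Δ Lmax T P v p ∧
      avgRate N K lam lamg d Dx σ2 T w v p = Real.logb 2 (1 + P * (∑ k, G k) / (N * σ2)) := by
  generalize hS_def : ∑ k, G k = S
  have hS : 0 < S := hS_def ▸ Finset.sum_pos (fun k _ => hGpos k) ⟨⟨0, hK⟩, Finset.mem_univ _⟩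
  choose vstar hvstar hgain using fun k => (hGatt k).1
  beta_reduce at hgain
  obtain ⟨c, hc, hc0, hcT, hlen⟩ :=
    exists_breakpoints (a := fun k => T * G k / S) fun k => by have := hGpos k; positivity
  replace hcT : c (Fin.last K) = T := by
    rw [hcT, ← Finset.sum_div, ← Finset.mul_sum, hS_def]
    field_simp
  have hrx : ∀ t ∈ Ioc 0 T, receivedPower N K lam lamg d Dx w (timeShared c vstar)
      (timeSharedPower c fun k => P * S / G k) t = P * S := by
    intro t ht
    obtain ⟨k, hk⟩ := exists_mem_timeSlot (c := c) (by rwa [hc0, hcT])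
    rw [hc.receivedPower_timeShared hk, hgain k]
    field_simp [(hGpos k).ne']
  refine ⟨timeShared c vstar, timeSharedPower c fun k => P * S / G k,
    feasible_timeShared hc hc0 hcT hvstar (fun k => by have := hGpos k; positivity)
      (fun k => ?_), ?_⟩
  · rw [hlen]
    exact (by field_simp [(hGpos k).ne'] : P * S / G k * (T * G k / S) = T * P).le
  · change 1 / T * ∫ t in Ioc 0 T, Real.logb 2 (1 + receivedPower N K lam lamg d Dx w
      (timeShared c vstar) (timeSharedPower c fun k => P * S / G k) t / (N * σ2)) = _
    rw [setIntegral_congr_fun measurableSet_Ioc fun t ht => by rw [hrx t ht], setIntegral_const,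
      Real.volume_real_Ioc_of_le hT.le, sub_zero, smul_eq_mul]
    field_simp

end Achievability

theorem sum_capacity_pinching_MAC_general
    (N K : ℕ) (hK : 1 ≤ K)
    (lam lamg d Dx Δ Lmax T P σ2 : ℝ)
    (hT : 0 < T) (hP : 0 < P) (hσ : 0 < σ2)
    (w : Fin K → ℝ × ℝ × ℝ)
    (G : Fin K → ℝ)
    (hGatt : ∀ k, IsGreatest
      ((fun vb => gain N lam lamg d Dx vb (w k)) '' Vfeas N Δ Lmax) (G k))
    (hGpos : ∀ k, 0 < G k) :
    sSup {r : ℝ | ∃ v p, Feasible N K Δ Lmax T P v p ∧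
        r = avgRate N K lam lamg d Dx σ2 T w v p}
      = Real.logb 2 (1 + P * (∑ k, G k) / (N * σ2)) := by
  refine IsGreatest.csSup_eq ⟨?_, ?_⟩
  · obtain ⟨v, p, hvp, hrate⟩ := exists_feasible_avgRate_eq hK hT hP.le hGatt hGpos σ2
    exact ⟨v, p, hvp, hrate.symm⟩
  · rintro r ⟨v, p, hvp, rfl⟩
    exact hvp.avgRate_le (fun k vb hvb => (hGatt k).2 ⟨vb, hvb, rfl⟩) (fun k => (hGpos k).le) hT
      hP.le hσ.le

/-- Theorem 1: sum capacity of the pinching-antenna MAC.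
If for every user `k` the maximum channel power gain `G k` is attained on the feasible
set `V` and is positive, then the supremum of the average sum rate over all feasible
transmission strategies equals `log₂(1 + P (∑ k, G k) / (N σ²))`. -/
theorem sum_capacity_pinching_MAC
    (N K : ℕ) (hN : 1 ≤ N) (hK : 1 ≤ K)
    (lam lamg d Dx Δ Lmax T P σ2 : ℝ)
    (hlam : 0 < lam) (hlamg : 0 < lamg) (hd : 0 < d) (hΔ : 0 < Δ)
    (hLmax : 0 < Lmax) (hNL : ((N : ℝ) - 1) * Δ ≤ Lmax)
    (hT : 0 < T) (hP : 0 < P) (hσ : 0 < σ2)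
    (w : Fin K → ℝ × ℝ × ℝ) (hw : ∀ k, (w k).2.2 = 0)
    (G : Fin K → ℝ)
    (hGatt : ∀ k, IsGreatest
      ((fun vb => gain N lam lamg d Dx vb (w k)) '' Vfeas N Δ Lmax) (G k))
    (hGpos : ∀ k, 0 < G k) :
    sSup {r : ℝ | ∃ v p, Feasible N K Δ Lmax T P v p ∧
        r = avgRate N K lam lamg d Dx σ2 T w v p}
      = Real.logb 2 (1 + P * (∑ k, G k) / (N * σ2)) :=
  sum_capacity_pinching_MAC_general N K hK lam lamg d Dx Δ Lmax T P σ2 hT hP hσ w G hGatt hGpos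
end

section
/- Achievability of the sum-capacity bound by alternating single-user transmission: let K ≥ 1, T > 0, P > 0, c > 0, and G_1,…,G_K > 0. Define the time allocation τ_k = T·G_k/(Σ_{i=1}^K G_i) and the slot powers p*_k = P·(Σ_{i=1}^K G_i)/G_k. Then (i) Σ_{k=1}^K τ_k = T; (ii) τ_k·p*_k = T·P for every k (so each user's average power over the period equals exactly P); and (iii) (1/T)·Σ_{k=1}^K τ_k·log₂(1 + p*_k·G_k/c) = log₂(1 + P·(Σ_{k=1}^K G_k)/c), i.e., the per-slot rates are all equal and the average sum rate equals the bound. -/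
/-- achievability by alternating single-user transmission.
With time allocation `τ k = T G k / ∑ i, G i` and slot powers
`p* k = P (∑ i, G i) / G k`: (i) the durations sum to `T`; (ii) each user's total
energy `τ k · p* k` equals `T·P`; (iii) the time-averaged sum rate equals
`log₂(1 + P (∑ k, G k) / c)`. -/
theorem achievability_alternating_transmission
    (K : ℕ) (hK : 1 ≤ K) (T P c : ℝ) (hT : 0 < T) (hP : 0 < P) (hc : 0 < c)
    (G : Fin K → ℝ) (hG : ∀ k, 0 < G k)
    (τ pstar : Fin K → ℝ)
    (hτ : ∀ k, τ k = T * G k / ∑ i, G i)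
    (hps : ∀ k, pstar k = P * (∑ i, G i) / G k) :
    (∑ k, τ k = T) ∧
    (∀ k, τ k * pstar k = T * P) ∧
    (1 / T) * (∑ k, τ k * Real.logb 2 (1 + pstar k * G k / c))
      = Real.logb 2 (1 + P * (∑ k, G k) / c) := by
  have hS : 0 < ∑ i, G i := by
    apply Finset.sum_pos (fun i _ => hG i)
    exact Finset.univ_nonempty_iff.mpr ⟨⟨0, hK⟩⟩
  have hsum : ∑ k, τ k = T := by
    simp only [hτ]
    rw [← Finset.sum_div, ← Finset.mul_sum, mul_div_assoc, div_self hS.ne', mul_one]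
  have harg : ∀ k : Fin K, pstar k * G k = P * ∑ i, G i := fun k => by
    rw [hps k, div_mul_eq_mul_div, mul_div_assoc, div_self (hG k).ne', mul_one]
  refine ⟨hsum, fun k => ?_, ?_⟩
  · rw [hτ k, hps k]
    rw [div_mul_div_comm, mul_mul_mul_comm, mul_div_assoc,
      mul_comm (G k) (∑ i, G i), div_self (mul_ne_zero hS.ne' (hG k).ne'), mul_one]
  · have heq : ∀ k : Fin K, τ k * Real.logb 2 (1 + pstar k * G k / c)
        = τ k * Real.logb 2 (1 + P * (∑ i, G i) / c) := fun k => by rw [harg k]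
    rw [Finset.sum_congr rfl (fun k _ => heq k), ← Finset.sum_mul, hsum]
    rw [one_div, inv_mul_cancel_left₀ hT.ne']
end
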